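/- Commutation with the Euler field: for every vector field V : Fin n → Λ on ℝ^{0|n} whose components are all homogeneous of the same Grassmann parity, one has E ∘ V^↑ − V^↑ ∘ E = 0 and E ∘ V_↑ − V_↑ ∘ E = −V_↑ as linear endomorphisms of P. -/

import Mathlib

open TensorProduct

noncomputable section

/-- The Grassmann algebra on `n` odd generators `ξ^α`. -/
abbrev Lam (n : ℕ) : Type := ExteriorAlgebra ℝ (Fin n → ℝ)

/-- The odd coordinate `ξ^α`, i.e. the generator `e_α = ι (Pi.single α 1)`. -/
def gen {n : ℕ} (α : Fin n) : Lam n := ExteriorAlgebra.ι ℝ (Pi.single α 1)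

/-- The odd partial derivative `∂/∂ξ^α`: left contraction with the `α`-th
coordinate functional, the unique antiderivation sending `e_β` to `δ_{αβ}`. -/
def pd {n : ℕ} (α : Fin n) : Lam n →ₗ[ℝ] Lam n :=
  CliffordAlgebra.contractLeft (Q := (0 : QuadraticForm ℝ (Fin n → ℝ))) (LinearMap.proj α)

/-- The algebra of (pseudo)differential forms on `ℝ^{0|n}`:
polynomials in the even fiber coordinates `y^α` with Grassmann coefficients. -/
abbrev Forms (n : ℕ) : Type := MvPolynomial (Fin n) ℝ ⊗[ℝ] Lam n

/-- The de Rham differential `Q = y^α ∂_{ξ^α}`. -/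
def deRham (n : ℕ) : Forms n →ₗ[ℝ] Forms n :=
  ∑ α : Fin n, TensorProduct.map (LinearMap.mulLeft ℝ (MvPolynomial.X α)) (pd α)


/-- The inner product `i_V = V^α ∂_{y^α}` of the vector field `V = V^α ∂_{ξ^α}`. -/
def innerProd {n : ℕ} (V : Fin n → Lam n) : Forms n →ₗ[ℝ] Forms n :=
  ∑ α : Fin n, TensorProduct.map (MvPolynomial.pderiv α).toLinearMap
    (LinearMap.mulLeft ℝ (V α))

/-- The Euler field `E = y^α ∂_{y^α}`. -/
def euler (n : ℕ) : Forms n →ₗ[ℝ] Forms n :=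
  ∑ α : Fin n, TensorProduct.map
    (LinearMap.mulLeft ℝ (MvPolynomial.X α) ∘ₗ (MvPolynomial.pderiv α).toLinearMap)
    LinearMap.id

/-- The Lie derivative `L_V = V^α ∂_{ξ^α} + (-1)^p Q(V^α) ∂_{y^α}` of a vector field of
Grassmann parity `p`. -/
def lieDer {n : ℕ} (p : ZMod 2) (V : Fin n → Lam n) : Forms n →ₗ[ℝ] Forms n :=
  (∑ α : Fin n, TensorProduct.map LinearMap.id (LinearMap.mulLeft ℝ (V α) ∘ₗ pd α)) +
  (-1 : ℝ) ^ p.val •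
    ∑ α : Fin n, ∑ β : Fin n, TensorProduct.map
      (LinearMap.mulLeft ℝ (MvPolynomial.X β) ∘ₗ (MvPolynomial.pderiv α).toLinearMap)
      (LinearMap.mulLeft ℝ (pd β (V α)))

/-! `E` is the degree operator in the even coordinates `y`: it commutes with `Λ`-operators and
`[E, ·]` acts on `A ⊗ B` through `A` alone. Since `∂/∂y^α` has degree `-1` and multiplication by
`y^β` degree `+1`, we get `[E, ∂_α] = -∂_α` and `[E, y^β ∂_α] = 0`. Every term of `V^↑` is built
from `id` and `y^β ∂_α` on the polynomial factor, so it commutes with `E`, while every term of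
`V_↑` carries a single `∂_α`, so `[E, V_↑] = -V_↑`. -/

open MvPolynomial

namespace Module.End

variable {R M : Type*} [CommRing R] [AddCommGroup M] [Module R M]

def ad (E : Module.End R M) : Module.End R (Module.End R M) :=
  LinearMap.mulLeft R E - LinearMap.mulRight R E

theorem ad_apply (E A : Module.End R M) : ad E A = E ∘ₗ A - A ∘ₗ E := rfl

theorem ad_mul (E A B : Module.End R M) : ad E (A * B) = ad E A * B + A * ad E B := by
  simp only [ad, LinearMap.sub_apply, LinearMap.mulLeft_apply, LinearMap.mulRight_apply]
  noncomm_ring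

end Module.End

open Module.End

theorem TensorProduct.map_neg_left {R M N P Q : Type*} [CommRing R] [AddCommMonoid M]
    [Module R M] [AddCommMonoid N] [Module R N] [AddCommGroup P] [Module R P] [AddCommGroup Q]
    [Module R Q] (f : M →ₗ[R] P) (g : N →ₗ[R] Q) : map (-f) g = -map f g := by
  ext m n
  simp [neg_tmul]

theorem TensorProduct.ad_map_id_map {R M N : Type*} [CommRing R] [AddCommGroup M]
    [Module R M] [AddCommGroup N] [Module R N] (E A : Module.End R M) (B : Module.End R N) :
    ad (map E LinearMap.id) (map A B) = map (ad E A) B := by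
  ext m n
  simp [Module.End.ad_apply, sub_tmul]

namespace MvPolynomial

variable {σ R : Type*} [CommRing R]

theorem pderiv_comm (i j : σ) (f : MvPolynomial σ R) :
    pderiv i (pderiv j f) = pderiv j (pderiv i f) := by
  classical
  suffices ⁅pderiv i, pderiv j⁆ = (0 : Derivation R (MvPolynomial σ R) (MvPolynomial σ R)) by
    have h := congr($this f)
    rwa [Derivation.commutator_apply, Derivation.zero_apply, sub_eq_zero] at h
  refine derivation_ext fun k => ?_
  simp only [Derivation.commutator_apply, pderiv_X, Pi.single_apply]
  split_ifs <;> simp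

variable (σ R) [Fintype σ]

def eulerOp : Module.End R (MvPolynomial σ R) :=
  ∑ i, LinearMap.mulLeft R (X i) ∘ₗ (pderiv i).toLinearMap

variable {σ R}

theorem ad_eulerOp_pderiv (i : σ) :
    ad (eulerOp σ R) (pderiv i).toLinearMap = -(pderiv i).toLinearMap := by
  classical
  -- `∂_i (X_j g) = δ_ij g + X_j ∂_i g`, and the `∂_i`, `∂_j` commute
  refine LinearMap.ext fun f => ?_
  simp [Module.End.ad_apply, eulerOp, pderiv_X, Finset.sum_add_distrib, pderiv_comm i,
    Pi.single_apply]

theorem ad_eulerOp_mulLeft_X (i : σ) :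
    ad (eulerOp σ R) (LinearMap.mulLeft R (X i)) = LinearMap.mulLeft R (X i) := by
  classical
  refine LinearMap.ext fun f => ?_
  simp [Module.End.ad_apply, eulerOp, pderiv_X, Finset.sum_add_distrib, mul_add,
    Pi.single_apply, mul_left_comm (X i)]

theorem ad_eulerOp_mulLeft_X_comp_pderiv (i j : σ) :
    ad (eulerOp σ R) (LinearMap.mulLeft R (X j) ∘ₗ (pderiv i).toLinearMap) = 0 := by
  rw [← Module.End.mul_eq_comp, ad_mul, ad_eulerOp_mulLeft_X, ad_eulerOp_pderiv,
    Module.End.mul_eq_comp, Module.End.mul_eq_comp, LinearMap.comp_neg, add_neg_cancel]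

theorem ad_eulerOp_id : ad (eulerOp σ R) LinearMap.id = 0 := by
  rw [Module.End.ad_apply, LinearMap.comp_id, LinearMap.id_comp, sub_self]

end MvPolynomial

theorem euler_eq_map (n : ℕ) : euler n = TensorProduct.map (eulerOp (Fin n) ℝ) LinearMap.id := by
  refine TensorProduct.ext' fun f g => ?_
  simp [euler, eulerOp, sum_tmul]

theorem euler_comm_lifts_general (n : ℕ) (p : ZMod 2) (V : Fin n → Lam n) :
    euler n ∘ₗ lieDer p V - lieDer p V ∘ₗ euler n = 0 ∧
    euler n ∘ₗ innerProd V - innerProd V ∘ₗ euler n = -innerProd V := by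
  simp only [← ad_apply, euler_eq_map]
  constructor
  · simp only [lieDer, map_add, map_smul, map_sum, ad_map_id_map, ad_eulerOp_id,
      ad_eulerOp_mulLeft_X_comp_pderiv, map_zero_left, Finset.sum_const_zero, smul_zero,
      add_zero]
  · simp only [innerProd, map_sum, ad_map_id_map, ad_eulerOp_pderiv, map_neg_left]
    -- `G` fixes the additive structure: `innerProd V` reaches it by another instance path
    exact Finset.sum_neg_distrib (G := Module.End ℝ (Forms n)) _

/-- Commutation with the Euler field: for a vector field `V` of Grassmann parity `p`
(all components of element parity `p+1`), `[E, V^↑] = 0` and `[E, V_↑] = -V_↑`. -/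
theorem euler_comm_lifts (n : ℕ) (hn : 1 ≤ n) (p : ZMod 2) (V : Fin n → Lam n)
    (hV : ∀ α, V α ∈ CliffordAlgebra.evenOdd (0 : QuadraticForm ℝ (Fin n → ℝ)) (p + 1)) :
    euler n ∘ₗ lieDer p V - lieDer p V ∘ₗ euler n = 0 ∧
    euler n ∘ₗ innerProd V - innerProd V ∘ₗ euler n = -innerProd V :=
  euler_comm_lifts_general n p V
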